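/- Let A be a real n×n matrix, B a real n×m matrix, Q and R symmetric positive definite, and let P* be a symmetric positive definite solution of the algebraic Riccati equation P* = Q + AᵀP*A − AᵀP*B(R + BᵀP*B)⁻¹BᵀP*A, with Ā := A − B(R + BᵀP*B)⁻¹BᵀP*A. Let Q_N be symmetric with Q_N ⪰ P*, and define the Riccati difference equation by P_N = Q_N and P_t = Q + AᵀP_{t+1}A − AᵀP_{t+1}B(R + BᵀP_{t+1}B)⁻¹BᵀP_{t+1}A for t = N−1, …, 0. Then for every t ∈ {0, …, N}: |P_t − P*|_{P*} ≤ ‖Ā‖_{P*}^{2(N−t)} · |Q_N − P*|_{P*}, and consequently ‖P_t − P*‖ ≤ ‖P*‖ · ‖Ā‖_{P*}^{2(N−t)} · |Q_N − P*|_{P*}; since ‖Ā‖_{P*} < 1, the Riccati difference equation converges exponentially to the ARE solution. -/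

import Mathlib

/-
Completing the square gives, for every gain `K`,
`riccatiOp P = Q + KᵀRK + (A - BK)ᵀP(A - BK) - (K - K_P)ᵀ(R + BᵀPB)(K - K_P)`,
where `K_P = riccatiGain P`. Evaluating it at `P*` with the gain `K_P` and at `P` with the
gain `K_{P*}` sandwiches `riccatiOp P - P*` between `0` and `Āᵀ(P - P*)Ā` whenever `P ⪰ P*`,
so every backward step of the recursion multiplies the `P*`-relative bound by at most
`‖Ā‖²_{P*}`. At the fixed point the same identity gives the Lyapunov inequality
`ĀᵀP*Ā + Q ⪯ P*`, and `Q ⪰ ε P*` then forces `‖Ā‖_{P*} ≤ √(1 - ε) < 1`. The spectral-norm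
bound follows from `0 ⪯ X ⪯ |X|_{P*} P* ⪯ |X|_{P*} ‖P*‖ I`.
-/

open Matrix Finset

/-- Spectral norm of a real matrix: the operator norm with respect to the
Euclidean norms on the domain and codomain. -/
noncomputable def specNorm {p q : ℕ} (M : Matrix (Fin p) (Fin q) ℝ) : ℝ :=
  ‖LinearMap.toContinuousLinearMap (Matrix.toEuclideanLin M)‖

/-- Spectral radius of a real square matrix: the largest modulus of a
(complex) eigenvalue. -/
noncomputable def specRad {p : ℕ} (M : Matrix (Fin p) (Fin p) ℝ) : ℝ :=
  sSup {r : ℝ | ∃ μ ∈ spectrum ℂ (M.map (algebraMap ℝ ℂ)), r = ‖μ‖}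

/-- Smallest (real) eigenvalue of a square matrix. -/
noncomputable def lambdaMin {p : ℕ} (S : Matrix (Fin p) (Fin p) ℝ) : ℝ :=
  sInf {r : ℝ | ∃ v : Fin p → ℝ, v ≠ 0 ∧ S.mulVec v = r • v}

/-- `W`-induced norm of `M`: `sup_{z ≠ 0} √((zᵀMᵀWMz)/(zᵀWz))`. -/
noncomputable def winducedNorm {p : ℕ} (W M : Matrix (Fin p) (Fin p) ℝ) : ℝ :=
  sSup {r : ℝ | ∃ z : Fin p → ℝ, z ≠ 0 ∧
    r = Real.sqrt ((z ⬝ᵥ (Mᵀ * W * M).mulVec z) / (z ⬝ᵥ W.mulVec z))}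

/-- `W`-relative bound of a symmetric matrix `X`: `sup_{z ≠ 0} (zᵀXz)/(zᵀWz)`. -/
noncomputable def wrelBound {p : ℕ} (W X : Matrix (Fin p) (Fin p) ℝ) : ℝ :=
  sSup {r : ℝ | ∃ z : Fin p → ℝ, z ≠ 0 ∧
    r = (z ⬝ᵥ X.mulVec z) / (z ⬝ᵥ W.mulVec z)}

/-- Frobenius norm of a real matrix. -/
noncomputable def frobNorm {p q : ℕ} (M : Matrix (Fin p) (Fin q) ℝ) : ℝ :=
  Real.sqrt (∑ i, ∑ j, (M i j) ^ 2)

open scoped MatrixOrder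

theorem dotProduct_self_nonneg {ι : Type*} [Fintype ι] (z : ι → ℝ) : 0 ≤ z ⬝ᵥ z :=
  Fintype.sum_nonneg fun i => mul_self_nonneg (z i)

theorem dotProduct_transpose_mul_mul_mulVec {ι κ : Type*} [Fintype ι] [Fintype κ]
    (M : Matrix ι κ ℝ) (X : Matrix ι ι ℝ) (z : κ → ℝ) :
    z ⬝ᵥ (Mᵀ * X * M) *ᵥ z = (M *ᵥ z) ⬝ᵥ X *ᵥ (M *ᵥ z) := by
  rw [← mulVec_mulVec, ← mulVec_mulVec, dotProduct_mulVec, vecMul_transpose]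

namespace Matrix

theorem PosSemidef.transpose_mul_mul_same {ι κ : Type*} [Fintype ι] [Fintype κ]
    {X : Matrix ι ι ℝ} (hX : X.PosSemidef) (M : Matrix ι κ ℝ) : (Mᵀ * X * M).PosSemidef := by
  simpa using hX.conjTranspose_mul_mul_same M

theorem PosDef.add_transpose_mul_mul_same {ι κ : Type*} [Fintype ι] [Fintype κ]
    {R : Matrix κ κ ℝ} {P : Matrix ι ι ℝ} (hR : R.PosDef) (hP : P.PosSemidef)
    (B : Matrix ι κ ℝ) : (R + Bᵀ * P * B).PosDef :=
  hR.add_posSemidef (hP.transpose_mul_mul_same B)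

theorem PosSemidef.dotProduct_mulVec_nonneg' {ι : Type*} [Fintype ι] {X : Matrix ι ι ℝ}
    (hX : X.PosSemidef) (z : ι → ℝ) : 0 ≤ z ⬝ᵥ X *ᵥ z := by
  simpa using hX.dotProduct_mulVec_nonneg z

theorem PosDef.dotProduct_mulVec_pos' {ι : Type*} [Fintype ι] {W : Matrix ι ι ℝ}
    (hW : W.PosDef) {z : ι → ℝ} (hz : z ≠ 0) : 0 < z ⬝ᵥ W *ᵥ z := by
  simpa using hW.dotProduct_mulVec_pos hz

theorem dotProduct_mulVec_le_of_le {ι : Type*} [Fintype ι] {X Y : Matrix ι ι ℝ} (h : X ≤ Y)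
    (z : ι → ℝ) : z ⬝ᵥ X *ᵥ z ≤ z ⬝ᵥ Y *ᵥ z := by
  have := (le_iff.1 h).dotProduct_mulVec_nonneg' z
  rw [sub_mulVec, dotProduct_sub] at this
  linarith

theorem PosDef.exists_pos_mul_dotProduct_self_le {ι : Type*} [Fintype ι] [DecidableEq ι]
    {W : Matrix ι ι ℝ} (hW : W.PosDef) : ∃ c > 0, ∀ z, c * (z ⬝ᵥ z) ≤ z ⬝ᵥ W *ᵥ z := by
  rcases isEmpty_or_nonempty ι with _ | _
  · exact ⟨1, one_pos, fun z => by simp [Subsingleton.elim z 0]⟩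
  obtain ⟨c, hc, hcW⟩ := (CFC.exists_pos_algebraMap_le_iff hW.isHermitian).2
    ((StarOrderedRing.isStrictlyPositive_iff_spectrum_pos W).1 hW.isStrictlyPositive)
  refine ⟨c, hc, fun z => ?_⟩
  simpa [sub_mulVec, Algebra.algebraMap_eq_smul_one, smul_mulVec] using
    (le_iff.1 hcW).dotProduct_mulVec_nonneg' z

end Matrix

section SpectralNorm

variable {n : ℕ}

theorem specNorm_nonneg {p q : ℕ} (M : Matrix (Fin p) (Fin q) ℝ) : 0 ≤ specNorm M :=
  norm_nonneg _

theorem inner_toEuclideanLin_toLp (X : Matrix (Fin n) (Fin n) ℝ) (z : Fin n → ℝ) :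
    inner ℝ (LinearMap.toContinuousLinearMap (toEuclideanLin X) (WithLp.toLp 2 z))
      (WithLp.toLp 2 z) = z ⬝ᵥ X *ᵥ z := by
  simp [EuclideanSpace.inner_toLp_toLp]

theorem norm_toLp_sq (z : Fin n → ℝ) :
    ‖(WithLp.toLp 2 z : EuclideanSpace ℝ (Fin n))‖ ^ 2 = z ⬝ᵥ z := by
  rw [← real_inner_self_eq_norm_sq, EuclideanSpace.inner_toLp_toLp]
  simp

theorem dotProduct_mulVec_le_specNorm_mul (X : Matrix (Fin n) (Fin n) ℝ) (z : Fin n → ℝ) :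
    z ⬝ᵥ X *ᵥ z ≤ specNorm X * (z ⬝ᵥ z) := by
  set T := LinearMap.toContinuousLinearMap (toEuclideanLin X)
  set x : EuclideanSpace ℝ (Fin n) := WithLp.toLp 2 z
  calc z ⬝ᵥ X *ᵥ z = inner ℝ (T x) x := (inner_toEuclideanLin_toLp X z).symm
    _ ≤ ‖T x‖ * ‖x‖ := real_inner_le_norm _ _
    _ ≤ ‖T‖ * ‖x‖ * ‖x‖ := by gcongr; exact T.le_opNorm x
    _ = specNorm X * (z ⬝ᵥ z) := by rw [mul_assoc, ← sq, norm_toLp_sq]; rfl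

theorem specNorm_le_of_dotProduct_mulVec_le {X : Matrix (Fin n) (Fin n) ℝ}
    (hX : X.PosSemidef) {c : ℝ} (hc : 0 ≤ c) (h : ∀ z, z ⬝ᵥ X *ᵥ z ≤ c * (z ⬝ᵥ z)) :
    specNorm X ≤ c := by
  set T := LinearMap.toContinuousLinearMap (toEuclideanLin X)
  rw [specNorm, T.norm_eq_iSup_rayleighQuotient (isSymmetric_toEuclideanLin_iff.2 hX.isHermitian)]
  refine ciSup_le fun x => ?_
  obtain ⟨z, rfl⟩ : ∃ z, x = WithLp.toLp 2 z := ⟨x.ofLp, rfl⟩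
  rw [ContinuousLinearMap.rayleighQuotient, ContinuousLinearMap.reApplyInnerSelf_apply,
    RCLike.re_to_real, inner_toEuclideanLin_toLp, norm_toLp_sq,
    abs_of_nonneg (div_nonneg (hX.dotProduct_mulVec_nonneg' z) (dotProduct_self_nonneg z))]
  exact div_le_of_le_mul₀ (dotProduct_self_nonneg z) hc (h z)

theorem Matrix.PosDef.exists_pos_mul_le {Q : Matrix (Fin n) (Fin n) ℝ} (hQ : Q.PosDef)
    (W : Matrix (Fin n) (Fin n) ℝ) : ∃ ε > 0, ∀ z, ε * (z ⬝ᵥ W *ᵥ z) ≤ z ⬝ᵥ Q *ᵥ z := by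
  obtain ⟨c, hc, hcQ⟩ := hQ.exists_pos_mul_dotProduct_self_le
  have hW1 : 0 < specNorm W + 1 := by linarith [specNorm_nonneg W]
  refine ⟨c / (specNorm W + 1), div_pos hc hW1, fun z => ?_⟩
  calc c / (specNorm W + 1) * (z ⬝ᵥ W *ᵥ z)
      ≤ c / (specNorm W + 1) * ((specNorm W + 1) * (z ⬝ᵥ z)) := by
        gcongr
        linarith [dotProduct_mulVec_le_specNorm_mul W z, dotProduct_self_nonneg z]
    _ = c * (z ⬝ᵥ z) := by field_simp
    _ ≤ z ⬝ᵥ Q *ᵥ z := hcQ z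

end SpectralNorm

section RelativeBounds

variable {n : ℕ} {W X : Matrix (Fin n) (Fin n) ℝ}

theorem exists_forall_div_le_of_posDef (hW : W.PosDef) (X : Matrix (Fin n) (Fin n) ℝ) :
    ∃ C, ∀ z ≠ 0, (z ⬝ᵥ X *ᵥ z) / (z ⬝ᵥ W *ᵥ z) ≤ C := by
  obtain ⟨c, hc, hcW⟩ := hW.exists_pos_mul_dotProduct_self_le
  refine ⟨specNorm X / c, fun z hz => (div_le_iff₀ (hW.dotProduct_mulVec_pos' hz)).2 ?_⟩
  calc z ⬝ᵥ X *ᵥ z ≤ specNorm X * (z ⬝ᵥ z) := dotProduct_mulVec_le_specNorm_mul X z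
    _ = specNorm X / c * (c * (z ⬝ᵥ z)) := by field_simp
    _ ≤ specNorm X / c * (z ⬝ᵥ W *ᵥ z) := by
        gcongr
        · exact div_nonneg (specNorm_nonneg X) hc.le
        · exact hcW z

theorem dotProduct_mulVec_le_wrelBound_mul (hW : W.PosDef) (X : Matrix (Fin n) (Fin n) ℝ)
    (z : Fin n → ℝ) : z ⬝ᵥ X *ᵥ z ≤ wrelBound W X * (z ⬝ᵥ W *ᵥ z) := by
  rcases eq_or_ne z 0 with rfl | hz
  · simp
  obtain ⟨C, hC⟩ := exists_forall_div_le_of_posDef hW X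
  rw [← div_le_iff₀ (hW.dotProduct_mulVec_pos' hz)]
  exact le_csSup ⟨C, by rintro _ ⟨y, hy, rfl⟩; exact hC y hy⟩ ⟨z, hz, rfl⟩

theorem wrelBound_le (hW : W.PosDef) {c : ℝ} (hc : 0 ≤ c)
    (h : ∀ z, z ⬝ᵥ X *ᵥ z ≤ c * (z ⬝ᵥ W *ᵥ z)) : wrelBound W X ≤ c :=
  Real.sSup_le (by
    rintro _ ⟨z, hz, rfl⟩
    exact (div_le_iff₀ (hW.dotProduct_mulVec_pos' hz)).2 (h z)) hc

theorem wrelBound_nonneg (hW : W.PosDef) (hX : X.PosSemidef) : 0 ≤ wrelBound W X :=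
  Real.sSup_nonneg (by
    rintro _ ⟨z, hz, rfl⟩
    exact div_nonneg (hX.dotProduct_mulVec_nonneg' z) (hW.dotProduct_mulVec_pos' hz).le)

theorem winducedNorm_nonneg (W M : Matrix (Fin n) (Fin n) ℝ) : 0 ≤ winducedNorm W M :=
  Real.sSup_nonneg (by rintro _ ⟨z, -, rfl⟩; exact Real.sqrt_nonneg _)

theorem dotProduct_mulVec_le_winducedNorm_sq_mul (hW : W.PosDef) (M : Matrix (Fin n) (Fin n) ℝ)
    (z : Fin n → ℝ) :
    (M *ᵥ z) ⬝ᵥ W *ᵥ (M *ᵥ z) ≤ winducedNorm W M ^ 2 * (z ⬝ᵥ W *ᵥ z) := by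
  rcases eq_or_ne z 0 with rfl | hz
  · simp
  obtain ⟨C, hC⟩ := exists_forall_div_le_of_posDef hW (Mᵀ * W * M)
  have hle : √((z ⬝ᵥ (Mᵀ * W * M) *ᵥ z) / (z ⬝ᵥ W *ᵥ z)) ≤ winducedNorm W M :=
    le_csSup ⟨√C, by rintro _ ⟨y, hy, rfl⟩; exact Real.sqrt_le_sqrt (hC y hy)⟩ ⟨z, hz, rfl⟩
  rw [Real.sqrt_le_left (winducedNorm_nonneg W M), div_le_iff₀ (hW.dotProduct_mulVec_pos' hz),
    dotProduct_transpose_mul_mul_mulVec] at hle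
  exact hle

theorem winducedNorm_le_sqrt (hW : W.PosDef) {M : Matrix (Fin n) (Fin n) ℝ} {c : ℝ}
    (h : ∀ z, (M *ᵥ z) ⬝ᵥ W *ᵥ (M *ᵥ z) ≤ c * (z ⬝ᵥ W *ᵥ z)) : winducedNorm W M ≤ √c :=
  Real.sSup_le (by
    rintro _ ⟨z, hz, rfl⟩
    refine Real.sqrt_le_sqrt ((div_le_iff₀ (hW.dotProduct_mulVec_pos' hz)).2 ?_)
    rw [dotProduct_transpose_mul_mul_mulVec]
    exact h z) (Real.sqrt_nonneg c)

theorem winducedNorm_lt_one {Q M : Matrix (Fin n) (Fin n) ℝ} (hW : W.PosDef) (hQ : Q.PosDef)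
    (h : Mᵀ * W * M + Q ≤ W) : winducedNorm W M < 1 := by
  obtain ⟨ε, hε, hεQ⟩ := hQ.exists_pos_mul_le W
  calc winducedNorm W M ≤ √(1 - ε) := winducedNorm_le_sqrt hW fun z => by
        have := dotProduct_mulVec_le_of_le h z
        rw [add_mulVec, dotProduct_add, dotProduct_transpose_mul_mul_mulVec] at this
        linarith [hεQ z]
    _ < 1 := (Real.sqrt_lt' one_pos).2 (by linarith)

theorem wrelBound_le_winducedNorm_sq_mul {Y M : Matrix (Fin n) (Fin n) ℝ} (hW : W.PosDef)
    (hX : X.PosSemidef) (hY : Y ≤ Mᵀ * X * M) :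
    wrelBound W Y ≤ winducedNorm W M ^ 2 * wrelBound W X := by
  have hX0 := wrelBound_nonneg hW hX
  refine wrelBound_le hW (by positivity) fun z => ?_
  calc z ⬝ᵥ Y *ᵥ z ≤ (M *ᵥ z) ⬝ᵥ X *ᵥ (M *ᵥ z) := by
        rw [← dotProduct_transpose_mul_mul_mulVec]; exact dotProduct_mulVec_le_of_le hY z
    _ ≤ wrelBound W X * ((M *ᵥ z) ⬝ᵥ W *ᵥ (M *ᵥ z)) :=
        dotProduct_mulVec_le_wrelBound_mul hW X _
    _ ≤ wrelBound W X * (winducedNorm W M ^ 2 * (z ⬝ᵥ W *ᵥ z)) := by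
        gcongr; exact dotProduct_mulVec_le_winducedNorm_sq_mul hW M z
    _ = winducedNorm W M ^ 2 * wrelBound W X * (z ⬝ᵥ W *ᵥ z) := by ring

theorem specNorm_le_specNorm_mul_wrelBound (hW : W.PosDef) (hX : X.PosSemidef) :
    specNorm X ≤ specNorm W * wrelBound W X := by
  have hX0 := wrelBound_nonneg hW hX
  refine specNorm_le_of_dotProduct_mulVec_le hX (mul_nonneg (specNorm_nonneg W) hX0) fun z => ?_
  calc z ⬝ᵥ X *ᵥ z ≤ wrelBound W X * (z ⬝ᵥ W *ᵥ z) := dotProduct_mulVec_le_wrelBound_mul hW X z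
    _ ≤ wrelBound W X * (specNorm W * (z ⬝ᵥ z)) := by
        gcongr; exact dotProduct_mulVec_le_specNorm_mul W z
    _ = specNorm W * wrelBound W X * (z ⬝ᵥ z) := by ring

end RelativeBounds

section Riccati

variable {ι κ : Type*} [Fintype ι] [Fintype κ] [DecidableEq κ]
  (A : Matrix ι ι ℝ) (B : Matrix ι κ ℝ) (Q : Matrix ι ι ℝ) (R : Matrix κ κ ℝ)

noncomputable def riccatiOp (P : Matrix ι ι ℝ) : Matrix ι ι ℝ :=
  Q + Aᵀ * P * A - Aᵀ * P * B * (R + Bᵀ * P * B)⁻¹ * (Bᵀ * P * A)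

noncomputable def riccatiGain (P : Matrix ι ι ℝ) : Matrix κ ι ℝ :=
  (R + Bᵀ * P * B)⁻¹ * (Bᵀ * P * A)

variable {R}

theorem riccatiOp_add_gain_sq {P : Matrix ι ι ℝ} (hP : P.IsSymm) (hR : R.IsSymm)
    (hS : IsUnit (R + Bᵀ * P * B).det) (L : Matrix κ ι ℝ) :
    riccatiOp A B Q R P
        + (L - riccatiGain A B R P)ᵀ * (R + Bᵀ * P * B) * (L - riccatiGain A B R P)
      = Q + Lᵀ * R * L + (A - B * L)ᵀ * P * (A - B * L) := by
  set S := R + Bᵀ * P * B with hSdef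
  set M := Bᵀ * P * A with hMdef
  set K := riccatiGain A B R P with hK
  have hMt : Mᵀ = Aᵀ * P * B := by
    simp only [M, transpose_mul, transpose_transpose, hP.eq, Matrix.mul_assoc]
  have hSK : S * K = M := mul_nonsing_inv_cancel_left _ _ hS
  have hKS : Kᵀ * S = Mᵀ := by
    have hSt : Sᵀ = S := by
      simp only [S, transpose_add, transpose_mul, transpose_transpose, hP.eq, hR.eq,
        Matrix.mul_assoc]
    rw [← hSK, transpose_mul, hSt]
  have hcorr : Aᵀ * P * B * S⁻¹ * M = Kᵀ * S * K := by
    rw [hKS, hMt, hK, riccatiGain, Matrix.mul_assoc]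
  calc riccatiOp A B Q R P + (L - K)ᵀ * S * (L - K)
      = Q + Aᵀ * P * A + Lᵀ * S * L - Lᵀ * (S * K) - Kᵀ * S * L := by
        rw [riccatiOp, hcorr, transpose_sub]
        simp only [Matrix.mul_sub, Matrix.sub_mul, Matrix.mul_assoc]
        abel
    _ = Q + Lᵀ * R * L + (A - B * L)ᵀ * P * (A - B * L) := by
        rw [hSK, hKS, hMt, hSdef, hMdef, transpose_sub, transpose_mul]
        simp only [Matrix.mul_sub, Matrix.sub_mul, Matrix.mul_add, Matrix.add_mul,
          Matrix.mul_assoc]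
        abel

theorem riccatiOp_add_gain_sq_of_posSemidef (hR : R.PosDef) {P : Matrix ι ι ℝ}
    (hP : P.PosSemidef) (L : Matrix κ ι ℝ) :
    riccatiOp A B Q R P
        + (L - riccatiGain A B R P)ᵀ * (R + Bᵀ * P * B) * (L - riccatiGain A B R P)
      = Q + Lᵀ * R * L + (A - B * L)ᵀ * P * (A - B * L) :=
  riccatiOp_add_gain_sq A B Q (isHermitian_iff_isSymm.1 hP.isHermitian)
    (isHermitian_iff_isSymm.1 hR.isHermitian)
    (hR.add_transpose_mul_mul_same hP B).det_pos.ne'.isUnit L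

theorem riccatiOp_eq_closedLoop (hR : R.PosDef) {P : Matrix ι ι ℝ} (hP : P.PosSemidef) :
    riccatiOp A B Q R P = Q + (riccatiGain A B R P)ᵀ * R * riccatiGain A B R P
      + (A - B * riccatiGain A B R P)ᵀ * P * (A - B * riccatiGain A B R P) := by
  simpa using riccatiOp_add_gain_sq_of_posSemidef A B Q hR hP (riccatiGain A B R P)

variable {A B Q}

theorem riccatiOp_mono (hR : R.PosDef) {P P' : Matrix ι ι ℝ} (hP : P.PosSemidef)
    (hPP' : P ≤ P') : riccatiOp A B Q R P ≤ riccatiOp A B Q R P' := by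
  have hP' : P'.PosSemidef := by simpa using (le_iff.1 hPP').add hP
  have hcompl := riccatiOp_add_gain_sq_of_posSemidef A B Q hR hP (riccatiGain A B R P')
  have hclosed := riccatiOp_eq_closedLoop A B Q hR hP'
  set K := riccatiGain A B R P
  set K' := riccatiGain A B R P'
  have hdiff : riccatiOp A B Q R P' - riccatiOp A B Q R P
      = (A - B * K')ᵀ * (P' - P) * (A - B * K') + (K' - K)ᵀ * (R + Bᵀ * P * B) * (K' - K) := by
    rw [hclosed, eq_sub_of_add_eq hcompl]
    simp only [Matrix.mul_sub, Matrix.sub_mul]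
    abel
  exact le_iff.2 (hdiff ▸ ((le_iff.1 hPP').transpose_mul_mul_same _).add
    ((hR.add_transpose_mul_mul_same hP B).posSemidef.transpose_mul_mul_same _))

theorem riccatiOp_sub_riccatiOp_le (hR : R.PosDef) {P P' : Matrix ι ι ℝ} (hP : P.PosSemidef)
    (hP' : P'.PosSemidef) :
    riccatiOp A B Q R P' - riccatiOp A B Q R P
      ≤ (A - B * riccatiGain A B R P)ᵀ * (P' - P) * (A - B * riccatiGain A B R P) := by
  have hcompl := riccatiOp_add_gain_sq_of_posSemidef A B Q hR hP' (riccatiGain A B R P)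
  have hclosed := riccatiOp_eq_closedLoop A B Q hR hP
  set K := riccatiGain A B R P
  set K' := riccatiGain A B R P'
  have hdiff : (A - B * K)ᵀ * (P' - P) * (A - B * K)
        - (riccatiOp A B Q R P' - riccatiOp A B Q R P)
      = (K - K')ᵀ * (R + Bᵀ * P' * B) * (K - K') := by
    rw [hclosed, eq_sub_of_add_eq hcompl]
    simp only [Matrix.mul_sub, Matrix.sub_mul]
    abel
  exact le_iff.2
    (hdiff ▸ (hR.add_transpose_mul_mul_same hP' B).posSemidef.transpose_mul_mul_same _)

theorem closedLoop_lyapunov (hR : R.PosDef) {P : Matrix ι ι ℝ} (hP : P.PosSemidef)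
    (hfix : riccatiOp A B Q R P = P) :
    (A - B * riccatiGain A B R P)ᵀ * P * (A - B * riccatiGain A B R P) + Q ≤ P := by
  have hclosed := riccatiOp_eq_closedLoop A B Q hR hP
  rw [hfix] at hclosed
  set K := riccatiGain A B R P
  have hdiff : P - ((A - B * K)ᵀ * P * (A - B * K) + Q) = Kᵀ * R * K := by
    nth_rw 1 [hclosed]
    abel
  exact le_iff.2 (hdiff ▸ hR.posSemidef.transpose_mul_mul_same K)

end Riccati

section Convergence

variable {n m : ℕ} {A : Matrix (Fin n) (Fin n) ℝ} {B : Matrix (Fin n) (Fin m) ℝ}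
  {Q Pstar : Matrix (Fin n) (Fin n) ℝ} {R : Matrix (Fin m) (Fin m) ℝ}

theorem wrelBound_riccatiOp_sub_le (hR : R.PosDef) (hPstar : Pstar.PosDef)
    (hfix : riccatiOp A B Q R Pstar = Pstar) {P : Matrix (Fin n) (Fin n) ℝ} (hP : Pstar ≤ P) :
    wrelBound Pstar (riccatiOp A B Q R P - Pstar)
      ≤ winducedNorm Pstar (A - B * riccatiGain A B R Pstar) ^ 2 * wrelBound Pstar (P - Pstar) := by
  have hPpsd : P.PosSemidef := by simpa using (le_iff.1 hP).add hPstar.posSemidef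
  have hstep := riccatiOp_sub_riccatiOp_le (A := A) (B := B) (Q := Q) hR hPstar.posSemidef hPpsd
  rw [hfix] at hstep
  exact wrelBound_le_winducedNorm_sq_mul hPstar (le_iff.1 hP) hstep

theorem riccati_iterate_bound (hR : R.PosDef) (hPstar : Pstar.PosDef)
    (hfix : riccatiOp A B Q R Pstar = Pstar) {N : ℕ} {P : ℕ → Matrix (Fin n) (Fin n) ℝ}
    (hPN : Pstar ≤ P N) (hP : ∀ t < N, P t = riccatiOp A B Q R (P (t + 1))) :
    ∀ t ≤ N, Pstar ≤ P t ∧ wrelBound Pstar (P t - Pstar)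
      ≤ winducedNorm Pstar (A - B * riccatiGain A B R Pstar) ^ (2 * (N - t))
        * wrelBound Pstar (P N - Pstar) := by
  intro t ht
  set a := winducedNorm Pstar (A - B * riccatiGain A B R Pstar)
  set b := wrelBound Pstar (P N - Pstar)
  induction ht using Nat.decreasingInduction with
  | self => simp [hPN, b]
  | of_succ t htN ih =>
    obtain ⟨hle, hbound⟩ := ih
    rw [hP t htN]
    refine ⟨hfix ▸ riccatiOp_mono hR hPstar.posSemidef hle, ?_⟩
    calc wrelBound Pstar (riccatiOp A B Q R (P (t + 1)) - Pstar)
        ≤ a ^ 2 * wrelBound Pstar (P (t + 1) - Pstar) :=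
          wrelBound_riccatiOp_sub_le hR hPstar hfix hle
      _ ≤ a ^ 2 * (a ^ (2 * (N - (t + 1))) * b) := by gcongr
      _ = a ^ (2 * (N - t)) * b := by
          rw [← mul_assoc, ← pow_add]; congr 2; omega

end Convergence

theorem riccati_difference_exponential_convergence_general {n m : ℕ}
    (A : Matrix (Fin n) (Fin n) ℝ) (B : Matrix (Fin n) (Fin m) ℝ)
    (Q Pstar QN : Matrix (Fin n) (Fin n) ℝ) (R : Matrix (Fin m) (Fin m) ℝ)
    (hQ : Q.PosDef) (hR : R.PosDef) (hPstar : Pstar.PosDef)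
    (hARE : Pstar = Q + Aᵀ * Pstar * A
      - Aᵀ * Pstar * B * (R + Bᵀ * Pstar * B)⁻¹ * (Bᵀ * Pstar * A))
    (hQNP : (QN - Pstar).PosSemidef)
    (N : ℕ) (P : ℕ → Matrix (Fin n) (Fin n) ℝ) (hPN : P N = QN)
    (hP : ∀ t, t < N → P t = Q + Aᵀ * P (t + 1) * A
      - Aᵀ * P (t + 1) * B * (R + Bᵀ * P (t + 1) * B)⁻¹ * (Bᵀ * P (t + 1) * A)) :
    letI Abar := A - B * (R + Bᵀ * Pstar * B)⁻¹ * (Bᵀ * Pstar * A)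
    winducedNorm Pstar Abar < 1 ∧
    ∀ t ≤ N,
      wrelBound Pstar (P t - Pstar)
        ≤ winducedNorm Pstar Abar ^ (2 * (N - t)) * wrelBound Pstar (QN - Pstar) ∧
      specNorm (P t - Pstar)
        ≤ specNorm Pstar * winducedNorm Pstar Abar ^ (2 * (N - t))
          * wrelBound Pstar (QN - Pstar) := by
  have hfix : riccatiOp A B Q R Pstar = Pstar := hARE.symm
  have hAbar : A - B * (R + Bᵀ * Pstar * B)⁻¹ * (Bᵀ * Pstar * A)
      = A - B * riccatiGain A B R Pstar := by
    simp only [riccatiGain, Matrix.mul_assoc]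
  rw [hAbar, ← hPN]
  refine ⟨winducedNorm_lt_one hPstar hQ (closedLoop_lyapunov hR hPstar.posSemidef hfix),
    fun t ht => ?_⟩
  obtain ⟨hle, hbound⟩ := riccati_iterate_bound hR hPstar hfix (hPN ▸ le_iff.2 hQNP) hP t ht
  refine ⟨hbound, ?_⟩
  calc specNorm (P t - Pstar) ≤ specNorm Pstar * wrelBound Pstar (P t - Pstar) :=
        specNorm_le_specNorm_mul_wrelBound hPstar (le_iff.1 hle)
    _ ≤ _ := by rw [mul_assoc]; gcongr; exact specNorm_nonneg Pstar

/-- Exponential convergence of the Riccati difference equation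
to the ARE solution, measured in the `P*`-relative bound and in spectral norm;
moreover the closed loop `Ā` contracts in the `P*`-induced norm. -/
theorem riccati_difference_exponential_convergence {n m : ℕ}
    (A : Matrix (Fin n) (Fin n) ℝ) (B : Matrix (Fin n) (Fin m) ℝ)
    (Q Pstar QN : Matrix (Fin n) (Fin n) ℝ) (R : Matrix (Fin m) (Fin m) ℝ)
    (hQ : Q.PosDef) (hR : R.PosDef) (hPstar : Pstar.PosDef)
    (hARE : Pstar = Q + Aᵀ * Pstar * A
      - Aᵀ * Pstar * B * (R + Bᵀ * Pstar * B)⁻¹ * (Bᵀ * Pstar * A))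
    (hQN : QN.IsSymm) (hQNP : (QN - Pstar).PosSemidef)
    (N : ℕ) (P : ℕ → Matrix (Fin n) (Fin n) ℝ) (hPN : P N = QN)
    (hP : ∀ t, t < N → P t = Q + Aᵀ * P (t + 1) * A
      - Aᵀ * P (t + 1) * B * (R + Bᵀ * P (t + 1) * B)⁻¹ * (Bᵀ * P (t + 1) * A)) :
    letI Abar := A - B * (R + Bᵀ * Pstar * B)⁻¹ * (Bᵀ * Pstar * A)
    winducedNorm Pstar Abar < 1 ∧
    ∀ t ≤ N,
      wrelBound Pstar (P t - Pstar)
        ≤ winducedNorm Pstar Abar ^ (2 * (N - t)) * wrelBound Pstar (QN - Pstar) ∧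
      specNorm (P t - Pstar)
        ≤ specNorm Pstar * winducedNorm Pstar Abar ^ (2 * (N - t))
          * wrelBound Pstar (QN - Pstar) :=
  riccati_difference_exponential_convergence_general A B Q Pstar QN R hQ hR hPstar hARE hQNP N P hPN
    hP
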